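/- Exact two-stage regression identity (exact algebraic content of Theorem 2): Let ε be a real random variable taking finitely many values that is independent of (R, Z, X), let m : {0,1} × 𝒵 × 𝒳 → ℝ, and set U := m(R, Z, X) + ε. Let V and W be nonnegative real random variables taking finitely many values, let a, c : 𝒳 → ℝ, λ > 0, β ∈ ℝ, b ∈ ℝ with b ≠ 0, and suppose that for every (r, z, x, e) with P(R = r, Z = z, X = x, ε = e) > 0: E[ V | R = r, Z = z, X = x, ε = e ] = λ·exp( a(x) + β·(m(r, z, x) + e) ) and E[ W | R = r, Z = z, X = x, ε = e ] = exp( c(x) + b·(m(r, z, x) + e) ). Then, with λ̃ := λ·E[exp(β·ε)] and κ := E[exp(b·ε)], for every (r, z, x) with P(R = r, Z = z, X = x) > 0: E[ W | R = r, Z = z, X = x ] > 0 and E[ V | R = r, Z = z, X = x ] = λ̃·exp( a(x) − (β/b)·c(x) )·( E[ W | R = r, Z = z, X = x ]/κ )^{β/b}; equivalently, log E[ V | R = r, Z = z, X = x ] = log λ̃ + a(x) − (β/b)·(c(x) + log κ) + (β/b)·log E[ W | R = r, Z = z, X = x ]. -/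

import Mathlib

open Finset

noncomputable section

open scoped Classical

variable {Ω : Type*} [Fintype Ω]

/-- Probability of an event `A` under the weight function `p`. -/
def pr (p : Ω → ℝ) (A : Ω → Prop) : ℝ := ∑ ω, if A ω then p ω else 0

/-- Expectation of a real random variable `Y` under the weight function `p`. -/
def ex (p : Ω → ℝ) (Y : Ω → ℝ) : ℝ := ∑ ω, p ω * Y ω

/-- Conditional probability `P(A | B)`. -/
def cpr (p : Ω → ℝ) (A B : Ω → Prop) : ℝ := pr p (fun ω => A ω ∧ B ω) / pr p B

/-- Conditional expectation `E[Y | B]`. -/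
def cex (p : Ω → ℝ) (Y : Ω → ℝ) (B : Ω → Prop) : ℝ :=
  (∑ ω, if B ω then p ω * Y ω else 0) / pr p B


lemma pr_congr (p : Ω → ℝ) {A B : Ω → Prop} (h : ∀ ω, A ω ↔ B ω) : pr p A = pr p B := by
  unfold pr; exact Finset.sum_congr rfl fun ω _ => by rw [if_congr (h ω) rfl rfl]

lemma cex_congr (p : Ω → ℝ) (Y : Ω → ℝ) {A B : Ω → Prop} (h : ∀ ω, A ω ↔ B ω) :
    cex p Y A = cex p Y B := by
  unfold cex
  rw [pr_congr p h]
  congr 1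
  exact Finset.sum_congr rfl fun ω _ => by rw [if_congr (h ω) rfl rfl]

lemma pr_nonneg (p : Ω → ℝ) (hp : ∀ ω, 0 ≤ p ω) (A : Ω → Prop) : 0 ≤ pr p A :=
  Finset.sum_nonneg fun ω _ => by by_cases h : A ω <;> simp [h, hp ω]

lemma cex_decomp (p : Ω → ℝ) (hp : ∀ ω, 0 ≤ p ω) (eps : Ω → ℝ) (B : Ω → Prop)
    (hB : 0 < pr p B) (Y : Ω → ℝ) (hY : ∀ ω, 0 ≤ Y ω) (K t : ℝ)
    (hind : ∀ e : ℝ, pr p (fun ω => B ω ∧ eps ω = e)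
        = pr p (fun ω => eps ω = e) * pr p B)
    (hmodel : ∀ e : ℝ, 0 < pr p (fun ω => B ω ∧ eps ω = e) →
        cex p Y (fun ω => B ω ∧ eps ω = e) = K * Real.exp (t * e)) :
    cex p Y B = K * ex p (fun ω => Real.exp (t * eps ω)) := by
  have hfiber : ∀ e : ℝ,
      (∑ ω ∈ Finset.univ.filter (fun ω => eps ω = e), if B ω then p ω * Y ω else 0)
        = K * Real.exp (t * e) * (pr p (fun ω => eps ω = e) * pr p B) := by
    intro e
    have hsum : (∑ ω ∈ Finset.univ.filter (fun ω => eps ω = e),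
        if B ω then p ω * Y ω else 0)
        = ∑ ω, if B ω ∧ eps ω = e then p ω * Y ω else 0 := by
      rw [Finset.sum_filter]
      refine Finset.sum_congr rfl fun ω _ => ?_
      by_cases h1 : eps ω = e <;> by_cases h2 : B ω <;> simp [h1, h2]
    rcases lt_or_eq_of_le (pr_nonneg p hp (fun ω => B ω ∧ eps ω = e)) with hpos | hzero
    · have := hmodel e hpos
      unfold cex at this
      rw [hsum]
      have h2 : (∑ ω, if B ω ∧ eps ω = e then p ω * Y ω else 0)
          = K * Real.exp (t * e) * pr p (fun ω => B ω ∧ eps ω = e) := by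
        field_simp at this
        refine Eq.trans ?_ (this.trans (by ring))
        exact Finset.sum_congr rfl fun ω _ => by
          congr 1 <;> exact Subsingleton.elim _ _
      rw [h2, hind e]
    · -- pr = 0 case
      have hz : pr p (fun ω => B ω ∧ eps ω = e) = 0 := hzero.symm
      have hterm : ∀ ω, (if B ω ∧ eps ω = e then p ω * Y ω else 0) = 0 := by
        intro ω
        by_cases h : B ω ∧ eps ω = e
        · have hp0 : p ω = 0 := by
            have := (Finset.sum_eq_zero_iff_of_nonneg (fun ω _ => by
              by_cases h' : B ω ∧ eps ω = e <;> simp [h', hp ω])).mp hz ω (Finset.mem_univ ω)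
            simpa [pr, h] using this
          simp [h, hp0]
        · simp [h]
      rw [hsum, Finset.sum_eq_zero fun ω _ => hterm ω]
      rw [hind e] at hz
      rw [hz]; ring
  have hN : (∑ ω, if B ω then p ω * Y ω else 0)
      = K * ex p (fun ω => Real.exp (t * eps ω)) * pr p B := by
    rw [← Finset.sum_fiberwise_of_maps_to (t := Finset.univ.image eps)
      (g := eps) (fun ω _ => Finset.mem_image_of_mem eps (Finset.mem_univ ω))
      (fun ω => if B ω then p ω * Y ω else 0)]
    have hex : ex p (fun ω => Real.exp (t * eps ω))
        = ∑ e ∈ Finset.univ.image eps, Real.exp (t * e) * pr p (fun ω => eps ω = e) := by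
      unfold ex
      rw [← Finset.sum_fiberwise_of_maps_to (t := Finset.univ.image eps)
        (g := eps) (fun ω _ => Finset.mem_image_of_mem eps (Finset.mem_univ ω))
        (fun ω => p ω * Real.exp (t * eps ω))]
      refine Finset.sum_congr rfl fun e _ => ?_
      unfold pr
      rw [Finset.mul_sum, Finset.sum_filter]
      refine Finset.sum_congr rfl fun ω _ => ?_
      by_cases h : eps ω = e <;> simp [h] <;> ring
    rw [hex, Finset.mul_sum, Finset.sum_mul]
    refine Finset.sum_congr rfl fun e _ => ?_
    rw [hfiber e]; ring
  unfold cex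
  rw [hN, mul_div_assoc, div_self hB.ne', mul_one]

lemma ex_exp_pos (p : Ω → ℝ) (hp : ∀ ω, 0 ≤ p ω) (hp1 : ∑ ω, p ω = 1)
    (f : Ω → ℝ) : 0 < ex p (fun ω => Real.exp (f ω)) := by
  obtain ⟨ω0, -, hω0⟩ : ∃ ω ∈ Finset.univ, 0 < p ω := by
    by_contra h
    push_neg at h
    have : ∑ ω, p ω = 0 := Finset.sum_eq_zero fun ω hω =>
      le_antisymm (h ω hω) (hp ω)
    rw [hp1] at this; norm_num at this
  have hterm : 0 < p ω0 * Real.exp (f ω0) := mul_pos hω0 (Real.exp_pos _)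
  refine lt_of_lt_of_le hterm ?_
  exact Finset.single_le_sum (fun ω _ => mul_nonneg (hp ω) (Real.exp_pos _).le)
    (Finset.mem_univ ω0)

/-- Exact two-stage regression identity (exact algebraic content of Theorem 2). -/
theorem exact_two_stage_identity
    {𝒳 𝒵 : Type*} [Fintype 𝒳] [Fintype 𝒵]
    (p : Ω → ℝ) (hp : ∀ ω, 0 ≤ p ω) (hp1 : ∑ ω, p ω = 1)
    (R : Ω → Bool) (X : Ω → 𝒳) (Z : Ω → 𝒵)
    (eps : Ω → ℝ)
    -- ε is independent of (R, Z, X)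
    (hindep : ∀ (e : ℝ) (r : Bool) (z : 𝒵) (x : 𝒳),
      pr p (fun ω => eps ω = e ∧ (R ω = r ∧ Z ω = z ∧ X ω = x))
        = pr p (fun ω => eps ω = e) * pr p (fun ω => R ω = r ∧ Z ω = z ∧ X ω = x))
    (m : Bool → 𝒵 → 𝒳 → ℝ)
    (U : Ω → ℝ) (hU : ∀ ω, U ω = m (R ω) (Z ω) (X ω) + eps ω)
    (V W : Ω → ℝ) (hV0 : ∀ ω, 0 ≤ V ω) (hW0 : ∀ ω, 0 ≤ W ω)
    (a c : 𝒳 → ℝ) (lam : ℝ) (hlam : 0 < lam) (β b : ℝ) (hb : b ≠ 0)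
    (hVmodel : ∀ (r : Bool) (z : 𝒵) (x : 𝒳) (e : ℝ),
      0 < pr p (fun ω => R ω = r ∧ Z ω = z ∧ X ω = x ∧ eps ω = e) →
      cex p V (fun ω => R ω = r ∧ Z ω = z ∧ X ω = x ∧ eps ω = e)
        = lam * Real.exp (a x + β * (m r z x + e)))
    (hWmodel : ∀ (r : Bool) (z : 𝒵) (x : 𝒳) (e : ℝ),
      0 < pr p (fun ω => R ω = r ∧ Z ω = z ∧ X ω = x ∧ eps ω = e) →
      cex p W (fun ω => R ω = r ∧ Z ω = z ∧ X ω = x ∧ eps ω = e)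
        = Real.exp (c x + b * (m r z x + e))) :
    ∀ (r : Bool) (z : 𝒵) (x : 𝒳), 0 < pr p (fun ω => R ω = r ∧ Z ω = z ∧ X ω = x) →
      0 < cex p W (fun ω => R ω = r ∧ Z ω = z ∧ X ω = x)
      ∧ cex p V (fun ω => R ω = r ∧ Z ω = z ∧ X ω = x)
          = (lam * ex p (fun ω => Real.exp (β * eps ω)))
            * Real.exp (a x - (β / b) * c x)
            * (cex p W (fun ω => R ω = r ∧ Z ω = z ∧ X ω = x)
                / ex p (fun ω => Real.exp (b * eps ω))) ^ (β / b)
      ∧ Real.log (cex p V (fun ω => R ω = r ∧ Z ω = z ∧ X ω = x))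
          = Real.log (lam * ex p (fun ω => Real.exp (β * eps ω)))
            + a x - (β / b) * (c x + Real.log (ex p (fun ω => Real.exp (b * eps ω))))
            + (β / b) * Real.log (cex p W (fun ω => R ω = r ∧ Z ω = z ∧ X ω = x)) := by
  intro r z x hB
  set B : Ω → Prop := fun ω => R ω = r ∧ Z ω = z ∧ X ω = x with hBdef
  set Eβ : ℝ := ex p (fun ω => Real.exp (β * eps ω)) with hEβdef
  set Eb : ℝ := ex p (fun ω => Real.exp (b * eps ω)) with hEbdef
  have hEβ : 0 < Eβ := ex_exp_pos p hp hp1 _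
  have hEb : 0 < Eb := ex_exp_pos p hp hp1 _
  have hind' : ∀ e : ℝ, pr p (fun ω => B ω ∧ eps ω = e)
      = pr p (fun ω => eps ω = e) * pr p B := by
    intro e
    rw [pr_congr p (B := fun ω => eps ω = e ∧ (R ω = r ∧ Z ω = z ∧ X ω = x))
      (fun ω => by tauto)]
    exact hindep e r z x
  have hVeq : cex p V B = (lam * Real.exp (a x + β * m r z x)) * Eβ := by
    refine cex_decomp p hp eps B hB V hV0 _ β hind' ?_
    intro e he
    have hpr : 0 < pr p (fun ω => R ω = r ∧ Z ω = z ∧ X ω = x ∧ eps ω = e) := by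
      rwa [pr_congr p (A := fun ω => R ω = r ∧ Z ω = z ∧ X ω = x ∧ eps ω = e)
        (B := fun ω => B ω ∧ eps ω = e) (fun ω => by simp [hBdef]; tauto)]
    rw [cex_congr p V (B := fun ω => R ω = r ∧ Z ω = z ∧ X ω = x ∧ eps ω = e)
      (fun ω => by simp [hBdef]; tauto), hVmodel r z x e hpr,
      show a x + β * (m r z x + e) = (a x + β * m r z x) + β * e by ring, Real.exp_add]
    ring
  have hWeq : cex p W B = Real.exp (c x + b * m r z x) * Eb := by
    refine cex_decomp p hp eps B hB W hW0 _ b hind' ?_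
    intro e he
    have hpr : 0 < pr p (fun ω => R ω = r ∧ Z ω = z ∧ X ω = x ∧ eps ω = e) := by
      rwa [pr_congr p (A := fun ω => R ω = r ∧ Z ω = z ∧ X ω = x ∧ eps ω = e)
        (B := fun ω => B ω ∧ eps ω = e) (fun ω => by simp [hBdef]; tauto)]
    rw [cex_congr p W (B := fun ω => R ω = r ∧ Z ω = z ∧ X ω = x ∧ eps ω = e)
      (fun ω => by simp [hBdef]; tauto), hWmodel r z x e hpr,
      show c x + b * (m r z x + e) = (c x + b * m r z x) + b * e by ring, Real.exp_add]
  have hWpos : 0 < cex p W B := by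
    rw [hWeq]; positivity
  have hmain : cex p V B
      = (lam * Eβ) * Real.exp (a x - (β / b) * c x) * (cex p W B / Eb) ^ (β / b) := by
    rw [hVeq, hWeq, mul_div_assoc, div_self hEb.ne', mul_one, ← Real.exp_mul]
    have hcomb : Real.exp (a x - β / b * c x) * Real.exp ((c x + b * m r z x) * (β / b))
        = Real.exp (a x + β * m r z x) := by
      rw [← Real.exp_add]; congr 1; field_simp; ring
    linear_combination (-(lam * Eβ)) * hcomb
  refine ⟨hWpos, hmain, ?_⟩
  have hdiv : 0 < cex p W B / Eb := div_pos hWpos hEb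
  rw [hmain, Real.log_mul (by positivity) (Real.rpow_pos_of_pos hdiv _).ne',
    Real.log_mul (by positivity) (Real.exp_ne_zero _), Real.log_exp,
    Real.log_rpow hdiv, Real.log_div hWpos.ne' hEb.ne']
  ring
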